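/- Every unit square graph of height 2 admits a conflict-free 2-coloring. That is, if V is a finite set and p : V → ℝ² assigns to each vertex a point whose y-coordinate lies in [0, 2], then the simple graph on V in which distinct u, v are adjacent if and only if the Chebyshev (ℓ∞) distance between p(u) and p(v) is at most 2 admits a conflict-free 2-coloring. -/

import Mathlib

/-- A conflict-free coloring of `G` with `k` colors: a partial coloring
(uncolored vertices get `none`) such that every vertex has, in its closed
neighborhood, a colored vertex whose color occurs exactly once there. -/
def IsCFColoring {V : Type*} (G : SimpleGraph V) {k : ℕ} (χ : V → Option (Fin k)) : Prop :=
  ∀ v : V, ∃ u ∈ insert v (G.neighborSet v), (χ u).isSome ∧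
    ∀ w ∈ insert v (G.neighborSet v), χ w = χ u → w = u

/-- `G` admits a conflict-free coloring with `k` colors. -/
def HasCFColoring {V : Type*} (G : SimpleGraph V) (k : ℕ) : Prop :=
  ∃ χ : V → Option (Fin k), IsCFColoring G χ

/-- The unit square graph on points `p`: distinct vertices are adjacent iff the
Chebyshev (ℓ∞) distance of their points is at most 2 (the axis-aligned squares
of side length 2 centered at the points intersect). -/
def unitSquareGraph {V : Type*} (p : V → ℝ × ℝ) : SimpleGraph V where
  Adj u v := u ≠ v ∧ max |(p u).1 - (p v).1| |(p u).2 - (p v).2| ≤ 2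
  symm := by
    constructor
    intro u v ⟨h1, h2⟩
    exact ⟨h1.symm, by rwa [abs_sub_comm ((p v).1), abs_sub_comm ((p v).2)]⟩
  loopless := by
    constructor
    intro v ⟨h1, _⟩
    exact h1 rfl

/-!
Cut the plane into vertical strips `[2n, 2n + 2) × ℝ`. Since the height is 2, the points in
one strip form a clique, and adjacent points lie in the same or in neighbouring strips. Color
one vertex of every nonempty strip, by the parity of `n`, and leave the rest uncolored. The
colored vertex of the strip of `v` is a neighbour of `v`, and every other colored vertex of
`N[v]` lies in a neighbouring strip, so it has the other color.
-/

namespace SimpleGraph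

variable {V : Type*} (G : SimpleGraph V)

noncomputable def layerColoring [Nonempty V] (c : V → ℤ) (v : V) : Option (Fin 2) :=
  open Classical in
  if Function.invFun c (c v) = v then some (if Even (c v) then 0 else 1) else none

theorem layerColoring_invFun [Nonempty V] (c : V → ℤ) (v : V) :
    layerColoring c (Function.invFun c (c v)) = some (if Even (c v) then 0 else 1) := by
  have hc : c (Function.invFun c (c v)) = c v := Function.invFun_eq ⟨v, rfl⟩
  simp [layerColoring, hc]

theorem eq_invFun_of_layerColoring_eq [Nonempty V] {c : V → ℤ} {v w : V} (hvw : |c w - c v| ≤ 1)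
    (h : layerColoring c w = some (if Even (c v) then 0 else 1)) :
    w = Function.invFun c (c v) := by
  by_cases hw : Function.invFun c (c w) = w
  swap
  · simp [layerColoring, hw] at h
  have hpar : Even (c w) ↔ Even (c v) := by
    simp only [layerColoring, if_pos hw, Option.some.injEq] at h
    split_ifs at h <;> tauto
  have hcell : c w = c v := by
    rw [Int.even_iff, Int.even_iff] at hpar
    rw [abs_le] at hvw
    omega
  rw [← hw, hcell]

theorem hasCFColoring_two_of_layers (c : V → ℤ)
    (h_clique : ∀ u v, c u = c v → u ≠ v → G.Adj u v)
    (h_adj : ∀ u v, G.Adj u v → c u ≤ c v + 1) :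
    HasCFColoring G 2 := by
  cases isEmpty_or_nonempty V
  · exact ⟨fun _ => none, isEmptyElim⟩
  refine ⟨layerColoring c, fun v => ?_⟩
  set u := Function.invFun c (c v)
  have hcu : c u = c v := Function.invFun_eq ⟨v, rfl⟩
  have hu : u ∈ insert v (G.neighborSet v) := by
    by_cases huv : u = v
    · exact huv ▸ Set.mem_insert u _
    · exact Set.mem_insert_of_mem v (h_clique v u hcu.symm (Ne.symm huv))
  have hclose : ∀ w ∈ insert v (G.neighborSet v), |c w - c v| ≤ 1 := by
    rintro w (rfl | hw)
    · simp
    · exact abs_le.2 ⟨by linarith [h_adj v w hw], by linarith [h_adj w v hw.symm]⟩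
  refine ⟨u, hu, by simp [u, layerColoring_invFun], fun w hw hχ => ?_⟩
  rw [layerColoring_invFun] at hχ
  exact eq_invFun_of_layerColoring_eq (hclose w hw) hχ

end SimpleGraph

theorem abs_sub_lt_two_of_floor_half_eq {x y : ℝ} (h : ⌊x / 2⌋ = ⌊y / 2⌋) : |x - y| < 2 := by
  have := Int.abs_sub_lt_one_of_floor_eq_floor h
  rw [← sub_div, abs_div, abs_two] at this
  linarith

theorem floor_half_le_floor_half_add_one {x y : ℝ} (h : x ≤ y + 2) : ⌊x / 2⌋ ≤ ⌊y / 2⌋ + 1 := by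
  rw [← Int.floor_add_one]
  exact Int.floor_le_floor (by linarith)

theorem stmt10_general {V : Type*} (p : V → ℝ × ℝ)
    (hp : ∀ v : V, (p v).2 ∈ Set.Icc (0 : ℝ) 2) :
    HasCFColoring (unitSquareGraph p) 2 := by
  refine (unitSquareGraph p).hasCFColoring_two_of_layers (fun v => ⌊(p v).1 / 2⌋) ?_ ?_
  · intro u v huv hne
    refine ⟨hne, max_le (abs_sub_lt_two_of_floor_half_eq huv).le (abs_le.2 ⟨?_, ?_⟩)⟩ <;>
      linarith [(hp u).1, (hp u).2, (hp v).1, (hp v).2]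
  · intro u v huv
    have hx := (le_max_left _ _).trans huv.2
    exact floor_half_le_floor_half_add_one (by linarith [(abs_le.1 hx).2])

theorem stmt10 {V : Type*} [Fintype V] (p : V → ℝ × ℝ)
    (hp : ∀ v : V, (p v).2 ∈ Set.Icc (0 : ℝ) 2) :
    HasCFColoring (unitSquareGraph p) 2 :=
  stmt10_general p hp
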